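/- Let M_1 = span_F{χ_{E_ℓ} : ℓ a tangent line} and M_2 = span_F{χ_{E_{ℓ1}} + χ_{E_{ℓ2}} : ℓ1 ≠ ℓ2 tangent lines} inside F^E. Then dim_F M_1 = q, dim_F M_2 = q − 1, and the all-one vector 𝟏 ∈ F^E lies neither in M_1 nor in M_2. -/

import Mathlib

/- Setting: `K` is a finite field of odd order `q`.  Points and lines of
`PG(2,q)` are both represented as points of the projectivization of `K^3`
(homogeneous coordinates), with incidence given by vanishing of the dot
product.  `O` is the conic `X1^2 - X0*X2 = 0`. -/

open scoped Classical

noncomputable section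

namespace ConicCode

variable (K : Type*) [Field K] [Fintype K]

abbrev Pt := Projectivization K (Fin 3 → K)

instance : Finite (Pt K) := Quotient.finite _

noncomputable instance : Fintype (Pt K) := Fintype.ofFinite _

variable {K}

/-- Dot product of two coordinate triples. -/
def dotV (v w : Fin 3 → K) : K := v 0 * w 0 + v 1 * w 1 + v 2 * w 2

/-- Incidence between a point and a line (both given by projective triples). -/
def Incid (p ℓ : Pt K) : Prop := dotV p.rep ℓ.rep = 0

/-- Membership in the conic `O` defined by `X1^2 - X0*X2`. -/
def OnConic (p : Pt K) : Prop := p.rep 1 ^ 2 - p.rep 0 * p.rep 2 = 0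

/-- A tangent line meets `O` in exactly one point. -/
def Tangent (ℓ : Pt K) : Prop := {p : Pt K | OnConic p ∧ Incid p ℓ}.ncard = 1

/-- A secant line meets `O` in exactly two points. -/
def Secant (ℓ : Pt K) : Prop := {p : Pt K | OnConic p ∧ Incid p ℓ}.ncard = 2

/-- A passant line misses `O`. -/
def Passant (ℓ : Pt K) : Prop := {p : Pt K | OnConic p ∧ Incid p ℓ}.ncard = 0

/-- An external point lies on exactly two tangent lines. -/
def External (p : Pt K) : Prop := {ℓ : Pt K | Tangent ℓ ∧ Incid p ℓ}.ncard = 2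

/-- An internal point lies on no tangent line. -/
def Internal (p : Pt K) : Prop := {ℓ : Pt K | Tangent ℓ ∧ Incid p ℓ}.ncard = 0


/-- Coordinates of the polar line of the point `(a0,a1,a2)`: `[-a2/2, a1, -a0/2]`. -/
def perpVec (v : Fin 3 → K) : Fin 3 → K := ![-(v 2) / 2, v 1, -(v 0) / 2]

/-- The polarity `⊥` induced by the conic `O`.  (In odd characteristic
`perpVec` of a nonzero vector is nonzero, so the `else` branch is never
taken.) -/
def perp (p : Pt K) : Pt K :=
  if h : perpVec p.rep ≠ 0 then Projectivization.mk K _ h else p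

/-- Cross product: coordinates of the line through two distinct points. -/
def crossVec (v w : Fin 3 → K) : Fin 3 → K :=
  ![v 1 * w 2 - v 2 * w 1, v 2 * w 0 - v 0 * w 2, v 0 * w 1 - v 1 * w 0]

/-- The line through two distinct points (junk value if the points coincide). -/
def lineThrough (p q : Pt K) : Pt K :=
  if h : crossVec p.rep q.rep ≠ 0 then Projectivization.mk K _ h else p

/-- The intersection point of two distinct lines (junk value if they coincide). -/
def meetPt (l m : Pt K) : Pt K := lineThrough l m

/-- `F`, an algebraic closure of `F_2`. -/
abbrev F2b := AlgebraicClosure (ZMod 2)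

variable (K : Type*) [Field K] [Fintype K]

/-- The set `E` of external points, as a type. -/
abbrev Ept := {x : Pt K // External x}

/-- The set `I` of internal points, as a type. -/
abbrev Ipt := {x : Pt K // Internal x}

variable {K}

/-- `χ_ℓ = χ_{E_ℓ}`, the characteristic vector (indexed by external points)
of the set of external points on the line `ℓ`. -/
def chiLine (l : Pt K) : Ept K → F2b := fun e => if Incid e.1 l then 1 else 0

/-- `χ_{N_{Pa,E}(p)}`, the characteristic vector of the set of external
points lying on at least one passant line through `p`. -/
def chiNPa (p : Pt K) : Ept K → F2b :=
  fun e => if ∃ l, Passant l ∧ Incid p l ∧ Incid e.1 l then 1 else 0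

/-- `χ_{N_{Se,E}(p)}`, the characteristic vector of the set of external
points lying on at least one secant line through `p`. -/
def chiNSe (p : Pt K) : Ept K → F2b :=
  fun e => if ∃ l, Secant l ∧ Incid p l ∧ Incid e.1 l then 1 else 0

variable (K)

/-- `M_1`, the span of the vectors `χ_{E_ℓ}` for tangent lines `ℓ`. -/
def Mod1 : Submodule F2b (Ept K → F2b) :=
  Submodule.span F2b {f | ∃ l : Pt K, Tangent l ∧ f = chiLine l}

/-- `M_2`, the span of the vectors `χ_{E_{ℓ1}} + χ_{E_{ℓ2}}` for distinct
tangent lines `ℓ1 ≠ ℓ2`. -/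
def Mod2 : Submodule F2b (Ept K → F2b) :=
  Submodule.span F2b
    {f | ∃ l1 l2 : Pt K, Tangent l1 ∧ Tangent l2 ∧ l1 ≠ l2 ∧
      f = chiLine l1 + chiLine l2}

/-- `Col(D)`, the span of the vectors `χ_{N_{Pa,E}(p)}` for internal `p`. -/
def ColD : Submodule F2b (Ept K → F2b) :=
  Submodule.span F2b {f | ∃ p : Pt K, Internal p ∧ f = chiNPa p}

/-- `Col(D')`, the span of the vectors `χ_{N_{Se,E}(p)}` for internal `p`. -/
def ColD' : Submodule F2b (Ept K → F2b) :=
  Submodule.span F2b {f | ∃ p : Pt K, Internal p ∧ f = chiNSe p}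

variable {K}


-- ### Auxiliary development

set_option linter.unusedSectionVars false
set_option linter.unusedVariables false
set_option linter.unusedTactic false
set_option maxHeartbeats 1000000

-- ### auxiliary geometry

lemma vec_ne_zero_of (v : Fin 3 → K) (i : Fin 3) (h : v i ≠ 0) : v ≠ 0 :=
  fun h0 => h (by rw [h0]; rfl)

lemma incid_mk (v w : Fin 3 → K) (hv : v ≠ 0) (hw : w ≠ 0) :
    Incid (Projectivization.mk K v hv) (Projectivization.mk K w hw) ↔ dotV v w = 0 := by
  obtain ⟨a, ha⟩ := Projectivization.exists_smul_eq_mk_rep K v hv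
  obtain ⟨b, hb⟩ := Projectivization.exists_smul_eq_mk_rep K w hw
  unfold Incid dotV
  rw [← ha, ← hb]
  simp only [Pi.smul_apply, Units.smul_def, smul_eq_mul]
  have : ↑a * v 0 * (↑b * w 0) + ↑a * v 1 * (↑b * w 1) + ↑a * v 2 * (↑b * w 2)
      = (↑a * ↑b) * (v 0 * w 0 + v 1 * w 1 + v 2 * w 2) := by ring
  rw [this, mul_eq_zero]
  simp [Units.ne_zero, mul_ne_zero a.ne_zero b.ne_zero]

lemma incid_mk_left (v : Fin 3 → K) (hv : v ≠ 0) (ℓ : Pt K) :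
    Incid (Projectivization.mk K v hv) ℓ ↔ dotV v ℓ.rep = 0 := by
  conv_lhs => rw [← Projectivization.mk_rep ℓ]
  rw [incid_mk]

lemma onConic_mk (v : Fin 3 → K) (hv : v ≠ 0) :
    OnConic (Projectivization.mk K v hv) ↔ v 1 ^ 2 - v 0 * v 2 = 0 := by
  obtain ⟨a, ha⟩ := Projectivization.exists_smul_eq_mk_rep K v hv
  unfold OnConic
  rw [← ha]
  simp only [Pi.smul_apply, Units.smul_def, smul_eq_mul]
  have : (↑a * v 1) ^ 2 - ↑a * v 0 * (↑a * v 2) = (↑a * ↑a) * (v 1 ^ 2 - v 0 * v 2) := by ring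
  rw [this, mul_eq_zero]
  simp [mul_ne_zero a.ne_zero a.ne_zero]

def Pv (o : Option K) : Fin 3 → K := o.elim ![0, 0, 1] fun t => ![1, t, t ^ 2]

lemma Pv_ne (o : Option K) : Pv o ≠ 0 := by
  cases o with
  | none => exact vec_ne_zero_of _ 2 (by simp [Pv])
  | some t => exact vec_ne_zero_of _ 0 (by simp [Pv])

def Pfun (o : Option K) : Pt K := Projectivization.mk K (Pv o) (Pv_ne o)

def Lv (o : Option K) : Fin 3 → K := o.elim ![1, 0, 0] fun t => ![t ^ 2, -(2 * t), 1]

lemma Lv_ne (o : Option K) : Lv o ≠ 0 := by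
  cases o with
  | none => exact vec_ne_zero_of _ 0 (by simp [Lv])
  | some t => exact vec_ne_zero_of _ 2 (by simp [Lv])

def Lfun (o : Option K) : Pt K := Projectivization.mk K (Lv o) (Lv_ne o)

lemma incid_P_L (o o' : Option K) : Incid (Pfun o) (Lfun o') ↔ o = o' := by
  rw [Pfun, Lfun, incid_mk]
  cases o with
  | none => cases o' with
    | none => simp [dotV, Pv, Lv]
    | some t => simp [dotV, Pv, Lv]
  | some s => cases o' with
    | none => simp [dotV, Pv, Lv]
    | some t =>
      simp only [dotV, Pv, Lv, Option.elim]
      have : (1 : K) * t ^ 2 + s * -(2 * t) + s ^ 2 * 1 = (s - t) ^ 2 := by ring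
      simp only [Matrix.cons_val_zero, Matrix.cons_val_one, Matrix.head_cons]
      rw [show (![1, s, s^2] : Fin 3 → K) 2 = s ^ 2 from rfl,
        show (![t^2, -(2*t), 1] : Fin 3 → K) 2 = 1 from rfl, this,
        pow_eq_zero_iff (two_ne_zero), sub_eq_zero]
      simp

lemma Pfun_inj : Function.Injective (Pfun (K := K)) := by
  intro o o' h
  rw [Pfun, Pfun, Projectivization.mk_eq_mk_iff] at h
  obtain ⟨a, ha⟩ := h
  cases o with
  | none => cases o' with
    | none => rfl
    | some t =>
      have h0 := congrFun ha 0
      simp [Pv, Units.smul_def] at h0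
  | some s => cases o' with
    | none =>
      have h0 := congrFun ha 0
      simp [Pv, Units.smul_def] at h0
    | some t =>
      have h0 := congrFun ha 0
      have h1 := congrFun ha 1
      simp [Pv, Units.smul_def] at h0 h1
      rw [h0] at h1
      simp at h1
      rw [h1]

lemma Lfun_inj (h2 : (2 : K) ≠ 0) : Function.Injective (Lfun (K := K)) := by
  intro o o' h
  rw [Lfun, Lfun, Projectivization.mk_eq_mk_iff] at h
  obtain ⟨a, ha⟩ := h
  cases o with
  | none => cases o' with
    | none => rfl
    | some t =>
      have h0 := congrFun ha 2
      simp [Lv, Units.smul_def] at h0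
  | some s => cases o' with
    | none =>
      have h0 := congrFun ha 2
      simp [Lv, Units.smul_def] at h0
    | some t =>
      have hc2 := congrFun ha 2
      have hc1 := congrFun ha 1
      simp [Lv, Units.smul_def] at hc2 hc1
      rw [hc2] at hc1
      simp at hc1
      rcases hc1 with h | h
      · rw [h]
      · exact absurd h h2

lemma onConic_iff (p : Pt K) : OnConic p ↔ ∃ o, p = Pfun o := by
  constructor
  · intro h
    have hb : p.rep ≠ 0 := p.rep_nonzero
    have hp : p = Projectivization.mk K p.rep hb := (Projectivization.mk_rep p).symm
    have hQ : p.rep 1 ^ 2 - p.rep 0 * p.rep 2 = 0 := h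
    by_cases h0 : p.rep 0 = 0
    · have h1 : p.rep 1 = 0 := by
        have h' : p.rep 1 ^ 2 = 0 := by rw [h0] at hQ; linear_combination hQ
        exact (pow_eq_zero_iff (two_ne_zero)).mp h'
      have h2' : p.rep 2 ≠ 0 := by
        intro h2'
        apply hb; funext i; fin_cases i <;> simp [h0, h1, h2']
      refine ⟨none, ?_⟩
      rw [hp, Pfun, Projectivization.mk_eq_mk_iff]
      refine ⟨Units.mk0 (p.rep 2) h2', ?_⟩
      funext i; fin_cases i <;> simp [Pv, Units.smul_def, h0, h1]
    · refine ⟨some (p.rep 1 / p.rep 0), ?_⟩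
      rw [hp, Pfun, Projectivization.mk_eq_mk_iff]
      refine ⟨Units.mk0 (p.rep 0) h0, ?_⟩
      funext i; fin_cases i <;>
        simp [Pv, Units.smul_def]
      · field_simp
      · field_simp
        linear_combination hQ
  · rintro ⟨o, rfl⟩
    rw [Pfun, onConic_mk]
    cases o <;> simp [Pv]

lemma tangent_Lfun (o : Option K) : Tangent (Lfun o) := by
  unfold Tangent
  have hs : {p : Pt K | OnConic p ∧ Incid p (Lfun o)} = {Pfun o} := by
    ext p
    simp only [Set.mem_setOf_eq, Set.mem_singleton_iff]
    constructor
    · rintro ⟨hc, hi⟩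
      obtain ⟨o', rfl⟩ := (onConic_iff _).mp hc
      rw [incid_P_L] at hi
      rw [hi]
    · rintro rfl
      exact ⟨(onConic_iff _).mpr ⟨o, rfl⟩, (incid_P_L _ _).mpr rfl⟩
  rw [hs, Set.ncard_singleton]


lemma tangent_mk_classify (h2 : (2 : K) ≠ 0) (b : Fin 3 → K) (hb : b ≠ 0)
    (ht : Tangent (Projectivization.mk K b hb)) : ∃ o, Projectivization.mk K b hb = Lfun o := by
  obtain ⟨p0, hp0⟩ := Set.ncard_eq_one.mp ht
  have hincid : ∀ o : Option K, Incid (Pfun o) (Projectivization.mk K b hb) ↔ dotV (Pv o) b = 0 :=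
    fun o => incid_mk _ _ _ _
  by_cases hb2 : b 2 = 0
  · by_cases hb1 : b 1 = 0
    · have hb0 : b 0 ≠ 0 := by
        intro hb0; apply hb; funext i; fin_cases i <;> simp [hb0, hb1, hb2]
      refine ⟨none, ?_⟩
      rw [Lfun, Projectivization.mk_eq_mk_iff]
      refine ⟨Units.mk0 (b 0) hb0, ?_⟩
      funext i; fin_cases i <;> simp [Lv, Units.smul_def, hb1, hb2]
    · exfalso
      have hm1 : Pfun none ∈ {p : Pt K | OnConic p ∧ Incid p (Projectivization.mk K b hb)} := by
        refine ⟨(onConic_iff _).mpr ⟨none, rfl⟩, (hincid none).mpr ?_⟩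
        simp [dotV, Pv, hb2]
      have hm2 : Pfun (some (-(b 0) / b 1)) ∈
          {p : Pt K | OnConic p ∧ Incid p (Projectivization.mk K b hb)} := by
        refine ⟨(onConic_iff _).mpr ⟨_, rfl⟩, (hincid _).mpr ?_⟩
        show (1 : K) * b 0 + (-(b 0) / b 1) * b 1 + (-(b 0) / b 1) ^ 2 * b 2 = 0
        rw [hb2]; field_simp; ring
      rw [hp0] at hm1 hm2
      have := Pfun_inj (hm1.trans hm2.symm)
      simp at this
  · have hp0mem : p0 ∈ {p : Pt K | OnConic p ∧ Incid p (Projectivization.mk K b hb)} := by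
      rw [hp0]; rfl
    obtain ⟨hc, hi⟩ := hp0mem
    obtain ⟨o0, rfl⟩ := (onConic_iff _).mp hc
    cases o0 with
    | none =>
      exfalso
      have := (hincid none).mp hi
      simp [dotV, Pv] at this
      exact hb2 this
    | some s =>
      have h' : (1 : K) * b 0 + s * b 1 + s ^ 2 * b 2 = 0 := (hincid (some s)).mp hi
      have hroot : b 0 + s * b 1 + s ^ 2 * b 2 = 0 := by linear_combination h'
      set s1 : K := -(b 1) / b 2 - s with hs1def
      have hroot1 : (1 : K) * b 0 + s1 * b 1 + s1 ^ 2 * b 2 = 0 := by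
        rw [hs1def]
        field_simp
        linear_combination b 2 * hroot
      have hm1 : Pfun (some s1) ∈
          {p : Pt K | OnConic p ∧ Incid p (Projectivization.mk K b hb)} :=
        ⟨(onConic_iff _).mpr ⟨_, rfl⟩, (hincid _).mpr hroot1⟩
      rw [hp0] at hm1
      have hs1s : s1 = s := by
        have := Pfun_inj hm1
        simpa using this
      have hb1eq : b 1 = -(2 * s) * b 2 := by
        rw [hs1def] at hs1s
        field_simp at hs1s
        linear_combination -hs1s
      have hb0eq : b 0 = s ^ 2 * b 2 := by
        linear_combination hroot + (-s : K) * hb1eq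
      refine ⟨some s, ?_⟩
      rw [Lfun, Projectivization.mk_eq_mk_iff]
      refine ⟨Units.mk0 (b 2) hb2, ?_⟩
      funext i; fin_cases i <;>
        simp [Lv, Units.smul_def, hb0eq, hb1eq] <;> ring

lemma tangent_iff (h2 : (2 : K) ≠ 0) (ℓ : Pt K) : Tangent ℓ ↔ ∃ o, ℓ = Lfun o := by
  refine ⟨?_, by rintro ⟨o, rfl⟩; exact tangent_Lfun o⟩
  intro ht
  have hℓ : ℓ = Projectivization.mk K ℓ.rep ℓ.rep_nonzero := (Projectivization.mk_rep ℓ).symm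
  rw [hℓ] at ht ⊢
  exact tangent_mk_classify h2 _ _ ht

def Mv : Option K → Option K → Fin 3 → K
  | some s, some t => ![2, s + t, 2 * (s * t)]
  | some s, none => ![0, 1, 2 * s]
  | none, some t => ![0, 1, 2 * t]
  | none, none => ![1, 0, 0]

lemma Mv_ne (h2 : (2 : K) ≠ 0) (o1 o2 : Option K) : Mv o1 o2 ≠ 0 := by
  cases o1 <;> cases o2
  · exact vec_ne_zero_of _ 0 (by simp [Mv])
  · exact vec_ne_zero_of _ 1 (by simp [Mv])
  · exact vec_ne_zero_of _ 1 (by simp [Mv])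
  · exact vec_ne_zero_of _ 0 (by simpa [Mv] using h2)

def Mpt (o1 o2 : Option K) : Pt K :=
  if h : Mv o1 o2 ≠ 0 then Projectivization.mk K _ h else Pfun none

lemma incid_M_L (h2 : (2 : K) ≠ 0) (o1 o2 : Option K) (h12 : o1 ≠ o2) (u : Option K) :
    Incid (Mpt o1 o2) (Lfun u) ↔ u = o1 ∨ u = o2 := by
  rw [Mpt, dif_pos (Mv_ne h2 o1 o2), Lfun, incid_mk]
  cases o1 with
  | none => cases o2 with
    | none => exact absurd rfl h12
    | some t =>
      show dotV ![0,1,2*t] (Lv u) = 0 ↔ _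
      cases u with
      | none => simp [dotV, Lv]
      | some w =>
        simp only [dotV, Lv, Option.elim]
        show (0:K) * w ^ 2 + 1 * -(2*w) + 2*t*1 = 0 ↔ _
        constructor
        · intro h
          right
          have : 2 * (t - w) = 0 := by linear_combination h
          rcases mul_eq_zero.mp this with h' | h'
          · exact absurd h' h2
          · simp [sub_eq_zero.mp h'|>.symm]
        · rintro (h | h) <;> simp_all
  | some s => cases o2 with
    | none =>
      show dotV ![0,1,2*s] (Lv u) = 0 ↔ _
      cases u with
      | none => simp [dotV, Lv]
      | some w =>
        show (0:K) * w ^ 2 + 1 * -(2*w) + 2*s*1 = 0 ↔ _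
        constructor
        · intro h
          left
          have : 2 * (s - w) = 0 := by linear_combination h
          rcases mul_eq_zero.mp this with h' | h'
          · exact absurd h' h2
          · simp [sub_eq_zero.mp h'|>.symm]
        · rintro (h | h) <;> simp_all
    | some t =>
      show dotV ![2, s+t, 2*(s*t)] (Lv u) = 0 ↔ _
      cases u with
      | none =>
        show (2:K) * 1 + (s+t) * 0 + 2*(s*t)*0 = 0 ↔ _
        simp [h2]
      | some w =>
        show (2:K) * w ^ 2 + (s+t) * -(2*w) + 2*(s*t)*1 = 0 ↔ _
        constructor
        · intro h
          have : 2 * ((w - s) * (w - t)) = 0 := by linear_combination h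
          rcases mul_eq_zero.mp this with h' | h'
          · exact absurd h' h2
          · rcases mul_eq_zero.mp h' with h'' | h''
            · left; simp [sub_eq_zero.mp h'']
            · right; simp [sub_eq_zero.mp h'']
        · rintro (h | h) <;> simp only [Option.some_inj] at h <;> subst h <;> ring

lemma external_Mpt (h2 : (2 : K) ≠ 0) {o1 o2 : Option K} (h12 : o1 ≠ o2) :
    External (Mpt o1 o2) := by
  unfold External
  have hs : {ℓ : Pt K | Tangent ℓ ∧ Incid (Mpt o1 o2) ℓ} = {Lfun o1, Lfun o2} := by
    ext ℓ
    simp only [Set.mem_setOf_eq, Set.mem_insert_iff, Set.mem_singleton_iff]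
    constructor
    · rintro ⟨ht, hi⟩
      obtain ⟨u, rfl⟩ := (tangent_iff h2 ℓ).mp ht
      rcases (incid_M_L h2 o1 o2 h12 u).mp hi with h | h
      · left; rw [h]
      · right; rw [h]
    · rintro (rfl | rfl)
      · exact ⟨tangent_Lfun _, (incid_M_L h2 o1 o2 h12 o1).mpr (Or.inl rfl)⟩
      · exact ⟨tangent_Lfun _, (incid_M_L h2 o1 o2 h12 o2).mpr (Or.inr rfl)⟩
  rw [hs, Set.ncard_pair (fun h => h12 (Lfun_inj h2 h))]

lemma external_pair (h2 : (2 : K) ≠ 0) {p : Pt K} (hp : External p) :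
    ∃ o1 o2 : Option K, o1 ≠ o2 ∧ ∀ u, (Incid p (Lfun u) ↔ u = o1 ∨ u = o2) := by
  have hs : {ℓ : Pt K | Tangent ℓ ∧ Incid p ℓ} = Lfun '' {u | Incid p (Lfun u)} := by
    ext ℓ
    simp only [Set.mem_setOf_eq, Set.mem_image]
    constructor
    · rintro ⟨ht, hi⟩
      obtain ⟨u, rfl⟩ := (tangent_iff h2 ℓ).mp ht
      exact ⟨u, hi, rfl⟩
    · rintro ⟨u, hu, rfl⟩
      exact ⟨tangent_Lfun _, hu⟩
  have hcard : {u : Option K | Incid p (Lfun u)}.ncard = 2 := by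
    have := hp
    unfold External at this
    rw [hs, Set.ncard_image_of_injective _ (Lfun_inj h2)] at this
    exact this
  obtain ⟨o1, o2, h12, hset⟩ := Set.ncard_eq_two.mp hcard
  refine ⟨o1, o2, h12, fun u => ?_⟩
  constructor
  · intro hu
    have : u ∈ {u : Option K | Incid p (Lfun u)} := hu
    rw [hset] at this
    exact this
  · intro hu
    have : u ∈ ({o1, o2} : Set (Option K)) := hu
    rw [← hset] at this
    exact this


section Abstract

variable {T E' : Type*} [Fintype T] [Fintype E']

lemma two_eq_zero : (2 : F2b) = 0 := by
  have : CharP F2b 2 := inferInstance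
  exact_mod_cast CharP.cast_eq_zero F2b 2

variable (v : T → E' → F2b)

local notation "ψ" => Fintype.linearCombination F2b v

lemma eval_lin (c : T → F2b) (e : E') (x y : T) (hxy : x ≠ y)
    (hx : v x e = 1) (hy : v y e = 1) (h0 : ∀ ℓ, ℓ ≠ x → ℓ ≠ y → v ℓ e = 0) :
    (ψ c) e = c x + c y := by
  rw [Fintype.linearCombination_apply]
  rw [Finset.sum_apply]
  have key : ∀ i : T, (c i • v i) e = if i ∈ ({x, y} : Finset T) then c i * v i e else 0 := by
    intro i
    rw [Pi.smul_apply, smul_eq_mul]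
    by_cases h : i ∈ ({x, y} : Finset T)
    · rw [if_pos h]
    · rw [if_neg h]
      simp only [Finset.mem_insert, Finset.mem_singleton] at h
      push_neg at h
      rw [h0 i h.1 h.2, mul_zero]
  rw [Finset.sum_congr rfl fun i _ => key i, Finset.sum_ite_mem, Finset.univ_inter,
    Finset.sum_pair hxy, hx, hy, mul_one, mul_one]

theorem abstract_main
    (a b c : T) (hab : a ≠ b) (hac : a ≠ c) (hbc : b ≠ c)
    (heven : Even (Fintype.card T))
    (hpt : ∀ e : E', ∃ x y : T, x ≠ y ∧ v x e = 1 ∧ v y e = 1 ∧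
      ∀ ℓ, ℓ ≠ x → ℓ ≠ y → v ℓ e = 0)
    (hsurj : ∀ x y : T, x ≠ y → ∃ e : E', v x e = 1 ∧ v y e = 1 ∧
      ∀ ℓ, ℓ ≠ x → ℓ ≠ y → v ℓ e = 0) :
    Module.finrank F2b (Submodule.span F2b (Set.range v)) = Fintype.card T - 1 ∧
    Module.finrank F2b (Submodule.span F2b {f | ∃ x y : T, x ≠ y ∧ f = v x + v y})
      = Fintype.card T - 2 ∧
    (fun _ : E' => (1 : F2b)) ∉ Submodule.span F2b (Set.range v) ∧
    (fun _ : E' => (1 : F2b)) ∉ Submodule.span F2b {f | ∃ x y : T, x ≠ y ∧ f = v x + v y} := by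
  have h2 : (2 : F2b) = 0 := two_eq_zero
  -- the constant-one weight vector
  set c1 : T → F2b := fun _ => 1 with hc1
  have hc1ne : c1 ≠ 0 := by
    intro h
    have := congrFun h a
    simp [hc1] at this
  -- ψ kills the constants
  have hψc1 : ψ c1 = 0 := by
    funext e
    obtain ⟨x, y, hxy, hx, hy, h0⟩ := hpt e
    rw [eval_lin v c1 e x y hxy hx hy h0]
    show (1 : F2b) + 1 = (0 : E' → F2b) e
    show (1 : F2b) + 1 = 0
    linear_combination h2
  -- kernel of ψ is the constants
  have hker : LinearMap.ker ψ = Submodule.span F2b {c1} := by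
    apply le_antisymm
    · intro c hc
      rw [LinearMap.mem_ker] at hc
      have hcc : ∀ x y : T, x ≠ y → c x = c y := by
        intro x y hxy
        obtain ⟨e, hx', hy', h0'⟩ := hsurj x y hxy
        have h00 : (ψ c) e = 0 := by rw [hc]; rfl
        rw [eval_lin v c e x y hxy hx' hy' h0'] at h00
        linear_combination h00 - c y * h2
      have hconst : ∀ x : T, c x = c a := by
        intro x
        by_cases hx : x = a
        · rw [hx]
        · exact hcc x a hx
      rw [Submodule.mem_span_singleton]
      exact ⟨c a, by funext x; simp [hc1, hconst x, mul_comm]⟩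
    · rw [Submodule.span_le, Set.singleton_subset_iff]
      exact hψc1
  have hkerrank : Module.finrank F2b (LinearMap.ker ψ) = 1 := by
    rw [hker]; exact finrank_span_singleton hc1ne
  have hrange : LinearMap.range ψ = Submodule.span F2b (Set.range v) :=
    Fintype.range_linearCombination F2b v
  have hrn := LinearMap.finrank_range_add_finrank_ker ψ
  rw [hkerrank, Module.finrank_fintype_fun_eq_card] at hrn
  have hM1 : Module.finrank F2b (Submodule.span F2b (Set.range v)) = Fintype.card T - 1 := by
    rw [← hrange]; omega
  -- sum functional
  set σ : (T → F2b) →ₗ[F2b] F2b := Fintype.linearCombination F2b (fun _ : T => (1 : F2b))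
    with hσ
  have hσapp : ∀ c : T → F2b, σ c = ∑ i, c i := by
    intro c
    rw [hσ, Fintype.linearCombination_apply]
    simp
  have hσsurj : Function.Surjective σ := by
    intro r
    exact ⟨Pi.single a r, by rw [hσ, Fintype.linearCombination_apply_single, smul_eq_mul, mul_one]⟩
  have hσrank := LinearMap.finrank_range_add_finrank_ker σ
  rw [LinearMap.range_eq_top.mpr hσsurj, finrank_top, Module.finrank_self,
    Module.finrank_fintype_fun_eq_card] at hσrank
  -- c1 lies in ker σ
  have hc1H : c1 ∈ LinearMap.ker σ := by
    rw [LinearMap.mem_ker, hσapp]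
    obtain ⟨m, hm⟩ := heven
    simp only [hc1]
    rw [Finset.sum_const, Finset.card_univ, hm]
    push_cast
    linear_combination (m : F2b) * h2
  -- generators of M2 expressed through ψ
  have hgen : {f | ∃ x y : T, x ≠ y ∧ f = v x + v y} =
      ψ '' {c | ∃ x y : T, x ≠ y ∧ c = Pi.single x 1 + Pi.single y 1} := by
    ext f
    constructor
    · rintro ⟨x, y, hxy, rfl⟩
      refine ⟨Pi.single x 1 + Pi.single y 1, ⟨x, y, hxy, rfl⟩, ?_⟩
      rw [map_add, Fintype.linearCombination_apply_single, Fintype.linearCombination_apply_single,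
        one_smul, one_smul]
    · rintro ⟨cc, ⟨x, y, hxy, rfl⟩, rfl⟩
      refine ⟨x, y, hxy, ?_⟩
      rw [map_add, Fintype.linearCombination_apply_single, Fintype.linearCombination_apply_single,
        one_smul, one_smul]
  -- span of the pair-differences is ker σ
  have hspanH : Submodule.span F2b {c | ∃ x y : T, x ≠ y ∧ c = Pi.single x 1 + Pi.single y 1}
      = LinearMap.ker σ := by
    apply le_antisymm
    · rw [Submodule.span_le]
      rintro cc ⟨x, y, hxy, rfl⟩
      rw [SetLike.mem_coe, LinearMap.mem_ker, map_add, hσ,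
        Fintype.linearCombination_apply_single, Fintype.linearCombination_apply_single,
        smul_eq_mul, mul_one]
      linear_combination h2
    · intro c hc
      rw [LinearMap.mem_ker, hσapp] at hc
      have hrepr : c = ∑ x : T, c x • ((Pi.single x (1 : F2b) : T → F2b) + (Pi.single a 1 : T → F2b)) := by
        have e1 : ∀ x : T, c x • ((Pi.single x (1 : F2b) : T → F2b) + (Pi.single a 1 : T → F2b))
            = (Pi.single x (c x) : T → F2b) + c x • (Pi.single a (1:F2b) : T → F2b) := by
          intro x
          funext j
          simp only [Pi.smul_apply, Pi.add_apply, Pi.single_apply, smul_eq_mul]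
          split_ifs <;> ring
        rw [Finset.sum_congr rfl fun x _ => e1 x, Finset.sum_add_distrib,
          Finset.univ_sum_single, ← Finset.sum_smul, hc, zero_smul, add_zero]
      rw [hrepr]
      apply Submodule.sum_mem
      intro x _
      by_cases hx : x = a
      · have : (Pi.single x (1 : F2b) : T → F2b) + (Pi.single a 1 : T → F2b) = 0 := by
          rw [hx, ← two_smul F2b, h2, zero_smul]
        rw [this, smul_zero]
        exact Submodule.zero_mem _
      · exact Submodule.smul_mem _ _ (Submodule.subset_span ⟨x, a, hx, rfl⟩)
  have hM2span : Submodule.span F2b {f | ∃ x y : T, x ≠ y ∧ f = v x + v y}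
      = Submodule.map ψ (LinearMap.ker σ) := by
    rw [hgen, Submodule.span_image, hspanH]
  -- rank of M2 via restriction
  have hrest := LinearMap.finrank_range_add_finrank_ker (LinearMap.domRestrict ψ
    (LinearMap.ker σ))
  rw [LinearMap.range_domRestrict] at hrest
  have hkerrest : LinearMap.ker (LinearMap.domRestrict ψ (LinearMap.ker σ))
      = Submodule.span F2b {(⟨c1, hc1H⟩ : LinearMap.ker σ)} := by
    apply le_antisymm
    · intro x hx
      rw [LinearMap.mem_ker, LinearMap.domRestrict_apply] at hx
      have : (x : T → F2b) ∈ LinearMap.ker ψ := hx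
      rw [hker, Submodule.mem_span_singleton] at this
      obtain ⟨r, hr⟩ := this
      rw [Submodule.mem_span_singleton]
      exact ⟨r, Subtype.ext hr⟩
    · rw [Submodule.span_le, Set.singleton_subset_iff]
      rw [SetLike.mem_coe, LinearMap.mem_ker, LinearMap.domRestrict_apply]
      exact hψc1
  have hc1Hne : (⟨c1, hc1H⟩ : LinearMap.ker σ) ≠ 0 := by
    intro h
    apply hc1ne
    exact congrArg Subtype.val h
  have hkerrestrank : Module.finrank F2b
      (LinearMap.ker (LinearMap.domRestrict ψ (LinearMap.ker σ))) = 1 := by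
    rw [hkerrest]; exact finrank_span_singleton hc1Hne
  rw [hkerrestrank] at hrest
  have hM2 : Module.finrank F2b
      (Submodule.span F2b {f | ∃ x y : T, x ≠ y ∧ f = v x + v y}) = Fintype.card T - 2 := by
    rw [hM2span]; omega
  -- all-one not in M1
  have hone1 : (fun _ : E' => (1 : F2b)) ∉ Submodule.span F2b (Set.range v) := by
    rw [← hrange]
    rintro ⟨cc, hcc⟩
    have hval : ∀ x y : T, x ≠ y → cc x + cc y = 1 := by
      intro x y hxy
      obtain ⟨e, hx', hy', h0'⟩ := hsurj x y hxy
      have := congrFun hcc e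
      rw [eval_lin v cc e x y hxy hx' hy' h0'] at this
      exact this
    have h1 := hval a b hab
    have h2' := hval a c hac
    have h3 := hval b c hbc
    have : (1 : F2b) = 0 := by
      linear_combination h1 + h2' + h3 + (2 - cc a - cc b - cc c) * h2
    exact one_ne_zero this
  have hle : Submodule.span F2b {f | ∃ x y : T, x ≠ y ∧ f = v x + v y}
      ≤ Submodule.span F2b (Set.range v) := by
    rw [Submodule.span_le]
    rintro f ⟨x, y, hxy, rfl⟩
    exact Submodule.add_mem _ (Submodule.subset_span ⟨x, rfl⟩) (Submodule.subset_span ⟨y, rfl⟩)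
  exact ⟨hM1, hM2, hone1, fun h => hone1 (hle h)⟩

end Abstract

section FinalAux

variable {K : Type*} [Field K] [Fintype K]

lemma two_ne_zero_of_odd_card (hodd : Odd (Fintype.card K)) : (2 : K) ≠ 0 := by
  have hchar : ringChar K ≠ 2 := by
    intro h
    have he := FiniteField.even_card_iff_char_two.mp h
    have ho := Nat.odd_iff.mp hodd
    omega
  intro h
  have hd : ringChar K ∣ 2 := by
    have h' : ((2 : ℕ) : K) = 0 := by exact_mod_cast h
    exact (CharP.cast_eq_zero_iff K (ringChar K) 2).mp h'
  rcases Nat.prime_two.eq_one_or_self_of_dvd _ hd with h1 | h1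
  · have h'' : ((1 : ℕ) : K) = 0 :=
      (CharP.cast_eq_zero_iff K (ringChar K) 1).mpr (by simp [h1])
    simp at h''
  · exact hchar h1

end FinalAux

/-- `dim_F M_1 = q`, `dim_F M_2 = q - 1`, and the all-one
vector lies in neither `M_1` nor `M_2`. -/
theorem dim_tangent_spans
    (K : Type*) [Field K] [Fintype K] (hodd : Odd (Fintype.card K)) :
    Module.finrank F2b (Mod1 K) = Fintype.card K ∧
    Module.finrank F2b (Mod2 K) = Fintype.card K - 1 ∧
    (fun _ : Ept K => (1 : F2b)) ∉ Mod1 K ∧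
    (fun _ : Ept K => (1 : F2b)) ∉ Mod2 K := by
  have h2K : (2 : K) ≠ 0 := two_ne_zero_of_odd_card hodd
  set v : Option K → Ept K → F2b := fun o => chiLine (Lfun o) with hv
  have hchi : ∀ (e : Ept K) (x y : Option K),
      (∀ u, (Incid e.1 (Lfun u) ↔ u = x ∨ u = y)) →
      v x e = 1 ∧ v y e = 1 ∧ ∀ ℓ, ℓ ≠ x → ℓ ≠ y → v ℓ e = 0 := by
    intro e x y hiff
    refine ⟨?_, ?_, ?_⟩
    · show (if Incid e.1 (Lfun x) then (1 : F2b) else 0) = 1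
      rw [if_pos ((hiff x).mpr (Or.inl rfl))]
    · show (if Incid e.1 (Lfun y) then (1 : F2b) else 0) = 1
      rw [if_pos ((hiff y).mpr (Or.inr rfl))]
    · intro ℓ hℓx hℓy
      show (if Incid e.1 (Lfun ℓ) then (1 : F2b) else 0) = 0
      refine if_neg fun h => ?_
      rcases (hiff ℓ).mp h with h | h
      · exact hℓx h
      · exact hℓy h
  have hS1 : {f | ∃ l : Pt K, Tangent l ∧ f = chiLine l} = Set.range v := by
    ext f
    simp only [Set.mem_setOf_eq, Set.mem_range]
    constructor
    · rintro ⟨l, hl, rfl⟩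
      obtain ⟨o, rfl⟩ := (tangent_iff h2K l).mp hl
      exact ⟨o, rfl⟩
    · rintro ⟨o, rfl⟩
      exact ⟨Lfun o, tangent_Lfun o, rfl⟩
  have hS2 : {f | ∃ l1 l2 : Pt K, Tangent l1 ∧ Tangent l2 ∧ l1 ≠ l2 ∧
      f = chiLine l1 + chiLine l2} = {f | ∃ x y : Option K, x ≠ y ∧ f = v x + v y} := by
    ext f
    simp only [Set.mem_setOf_eq]
    constructor
    · rintro ⟨l1, l2, h1, h2, hne, rfl⟩
      obtain ⟨x, rfl⟩ := (tangent_iff h2K l1).mp h1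
      obtain ⟨y, rfl⟩ := (tangent_iff h2K l2).mp h2
      exact ⟨x, y, fun h => hne (by rw [h]), rfl⟩
    · rintro ⟨x, y, hxy, rfl⟩
      exact ⟨Lfun x, Lfun y, tangent_Lfun x, tangent_Lfun y,
        fun h => hxy (Lfun_inj h2K h), rfl⟩
  have hM1eq : Mod1 K = Submodule.span F2b (Set.range v) := by rw [Mod1, hS1]
  have hM2eq : Mod2 K = Submodule.span F2b {f | ∃ x y : Option K, x ≠ y ∧ f = v x + v y} := by
    rw [Mod2, hS2]
  have hpt : ∀ e : Ept K, ∃ x y : Option K, x ≠ y ∧ v x e = 1 ∧ v y e = 1 ∧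
      ∀ ℓ, ℓ ≠ x → ℓ ≠ y → v ℓ e = 0 := by
    intro e
    obtain ⟨o1, o2, h12, hiff⟩ := external_pair h2K e.2
    obtain ⟨ha, hb, hz⟩ := hchi e o1 o2 hiff
    exact ⟨o1, o2, h12, ha, hb, hz⟩
  have hsurj : ∀ x y : Option K, x ≠ y → ∃ e : Ept K, v x e = 1 ∧ v y e = 1 ∧
      ∀ ℓ, ℓ ≠ x → ℓ ≠ y → v ℓ e = 0 := by
    intro x y hxy
    exact ⟨⟨Mpt x y, external_Mpt h2K hxy⟩, hchi _ x y (incid_M_L h2K x y hxy)⟩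
  have heven : Even (Fintype.card (Option K)) := by
    rw [Fintype.card_option]
    exact hodd.add_one
  have hab : (none : Option K) ≠ some 0 := by simp
  have hac : (none : Option K) ≠ some 1 := by simp
  have hbc : (some (0 : K)) ≠ some 1 := by simp
  obtain ⟨m1, m2, mo1, mo2⟩ := abstract_main v none (some 0) (some 1) hab hac hbc
    heven hpt hsurj
  have hq : (1 : ℕ) ≤ Fintype.card K := Fintype.card_pos
  refine ⟨?_, ?_, ?_, ?_⟩
  · rw [hM1eq, m1, Fintype.card_option]
    omega
  · rw [hM2eq, m2, Fintype.card_option]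
    omega
  · rw [hM1eq]; exact mo1
  · rw [hM2eq]; exact mo2


end ConicCode
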